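/- For every n ≥ 0, the map t ↦ 𝕀(t) is a bijection from the set of ideal n-trees onto the set of nonempty monomial ideals in ℕ^n; that is, every nonempty monomial ideal I ⊆ ℕ^n equals 𝕀(t) for exactly one ideal n-tree t. -/

import Mathlib

open Pointwise

/-- A monomial ideal in `ℕ^n`, identified with a set of exponent vectors `I`
such that `I + ℕ^n = I`. -/
def IsMonomialIdeal {n : ℕ} (I : Set (Fin n → ℕ)) : Prop :=
  I + (Set.univ : Set (Fin n → ℕ)) = I

/-- The `e`-th quotient `I/e = {α ∈ ℕ^{n-1} : e·α ∈ I}` of a monomial ideal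
`I ⊆ ℕ^n`, where `e·α` is the concatenation. -/
def quotIdeal {n : ℕ} (I : Set (Fin (n + 1) → ℕ)) (e : ℕ) : Set (Fin n → ℕ) :=
  {α | Fin.cons e α ∈ I}

/-- `n`-trees: the unique `0`-tree is the leaf `⊥`; an `(n+1)`-tree is a partial
function from `ℕ` to `n`-trees with finite nonempty domain. -/
inductive NTree : ℕ → Type where
  | leaf : NTree 0
  | node {n : ℕ} (dom : Finset ℕ) (hdom : dom.Nonempty)
      (child : (e : ℕ) → e ∈ dom → NTree n) : NTree (n + 1)

namespace NTree

/-- The domain of an `(n+1)`-tree. -/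
def dom : ∀ {n : ℕ}, NTree (n + 1) → Finset ℕ
  | _, node d _ _ => d

theorem dom_nonempty : ∀ {n : ℕ} (t : NTree (n + 1)), t.dom.Nonempty
  | _, node _ h _ => h

/-- The child `t(e)` of an `(n+1)`-tree at `e ∈ dom t`. -/
def child : ∀ {n : ℕ} (t : NTree (n + 1)) (e : ℕ), e ∈ t.dom → NTree n
  | _, node _ _ c, e, he => c e he

/-- The monomial ideal `𝕀(t)` represented by an `n`-tree `t`. -/
def idealSet : ∀ {n : ℕ}, NTree n → Set (Fin n → ℕ)
  | 0, leaf => Set.univ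
  | n + 1, node d _ c =>
      {γ | ∃ (e : ℕ) (he : e ∈ d) (f : ℕ) (β : Fin n → ℕ),
        e ≤ f ∧ β ∈ idealSet (c e he) ∧ γ = Fin.cons f β}

/-- An `n`-tree is *ideal* if all its children are ideal and the ideals of the
children are strictly increasing along the domain. -/
def IsIdealTree : ∀ {n : ℕ}, NTree n → Prop
  | 0, leaf => True
  | _ + 1, node d _ c =>
      (∀ (e : ℕ) (he : e ∈ d), IsIdealTree (c e he)) ∧
      ∀ (e f : ℕ) (he : e ∈ d) (hf : f ∈ d), e < f →
        idealSet (c e he) ⊂ idealSet (c f hf)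

/-- The set of subtrees of `t` at depth `k`, as elements of `Σ m, NTree m`. -/
def subAt : ∀ {n : ℕ}, NTree n → ℕ → Set ((m : ℕ) × NTree m)
  | n, t, 0 => {⟨n, t⟩}
  | 0, leaf, _ + 1 => ∅
  | _ + 1, node d _ c, k + 1 => ⋃ (e : ℕ) (he : e ∈ d), subAt (c e he) k

/-- All subtrees of `t` (at any depth). -/
def allSub {n : ℕ} (t : NTree n) : Set ((m : ℕ) × NTree m) :=
  ⋃ k : ℕ, subAt t k

/-- The width of an `n`-tree: the maximum over `0 ≤ k ≤ n` of the number of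
pairwise distinct subtrees at depth `k`. -/
noncomputable def width {n : ℕ} (t : NTree n) : ℕ :=
  (Finset.range (n + 1)).sup fun k => (subAt t k).ncard

/-- The number of children of a tree: `|dom s|` for trees of positive height,
`0` for the leaf. -/
def degOf : (m : ℕ) × NTree m → ℕ
  | ⟨0, _⟩ => 0
  | ⟨_ + 1, s⟩ => s.dom.card

/-- The branching degree of an `n`-tree: the maximum of `|dom s|` over all
subtrees `s` of positive height. -/
noncomputable def branchingDegree {n : ℕ} (t : NTree n) : ℕ :=
  sSup {d | ∃ p ∈ allSub t, p.1 ≠ 0 ∧ d = degOf p}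

/-- The size (number of edges) of the monomial divisibility diagram of `t`:
the sum of `|dom s|` over all pairwise distinct subtrees `s` of `t` of
positive height. -/
noncomputable def mddSize {n : ℕ} (t : NTree n) : ℕ :=
  ∑ᶠ p ∈ {p ∈ allSub t | p.1 ≠ 0}, degOf p

/-- The singleton tree of `α`, representing the ideal `⟨α⟩ = α + ℕ^n`. -/
def singletonTree : ∀ {n : ℕ}, (Fin n → ℕ) → NTree n
  | 0, _ => leaf
  | _ + 1, α =>
      node {α 0} (Finset.singleton_nonempty _) fun _ _ => singletonTree (Fin.tail α)

end NTree

/-- The vector `(α_{k+1}, …, α_n)` of the last `n - k` coordinates of `α`. -/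
def tailFrom {n : ℕ} (α : Fin n → ℕ) (k : ℕ) (hk : k ≤ n) : Fin (n - k) → ℕ :=
  fun i => α (Fin.cast (Nat.sub_add_cancel hk) (i.addNat k))
section AuxLemmas

open NTree

lemma isMonomialIdeal_iff {n : ℕ} {I : Set (Fin n → ℕ)} :
    IsMonomialIdeal I ↔ ∀ α ∈ I, ∀ δ : Fin n → ℕ, α + δ ∈ I := by
  constructor
  · intro h α hα δ
    rw [IsMonomialIdeal] at h
    rw [← h]
    exact Set.add_mem_add hα (Set.mem_univ δ)
  · intro h
    apply Set.Subset.antisymm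
    · rintro x ⟨a, ha, b, -, rfl⟩
      exact h a ha b
    · intro x hx
      exact ⟨x, hx, 0, Set.mem_univ _, add_zero x⟩

lemma mem_of_le {n : ℕ} {I : Set (Fin n → ℕ)} (hI : IsMonomialIdeal I)
    {α β : Fin n → ℕ} (hα : α ∈ I) (h : α ≤ β) : β ∈ I := by
  have := isMonomialIdeal_iff.mp hI α hα (β - α)
  rwa [add_tsub_cancel_of_le h] at this

lemma cons_add_cons {n : ℕ} (e f : ℕ) (α β : Fin n → ℕ) :
    (Fin.cons e α : Fin (n + 1) → ℕ) + Fin.cons f β = Fin.cons (e + f) (α + β) := by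
  funext i
  refine Fin.cases ?_ ?_ i <;> simp

lemma chain_stab {n : ℕ} (J : ℕ → Set (Fin n → ℕ)) (hmono : Monotone J)
    (hmi : ∀ k, IsMonomialIdeal (J k)) : ∃ N, ∀ m, N ≤ m → J m = J N := by
  by_contra h
  push_neg at h
  choose m hm hne using h
  set k : ℕ → ℕ := fun i => m^[i] 0 with hk
  have hki : ∀ i, k (i + 1) = m (k i) := fun i => Function.iterate_succ_apply' m i 0
  have hmono' : ∀ i, J (k i) ⊆ J (k (i + 1)) := fun i => by
    rw [hki]; exact hmono (hm _)
  have hne' : ∀ i, J (k (i + 1)) ≠ J (k i) := fun i => by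
    rw [hki]; exact hne _
  have hdiff : ∀ i, ∃ α, α ∈ J (k (i + 1)) ∧ α ∉ J (k i) := by
    intro i
    by_contra hc
    push_neg at hc
    exact hne' i (Set.Subset.antisymm hc (hmono' i))
  choose α hα1 hα2 using hdiff
  have hsub : ∀ i j, i ≤ j → J (k i) ⊆ J (k j) := by
    intro i j hij
    induction j, hij using Nat.le_induction with
    | base => exact subset_rfl
    | succ j hij ih => exact ih.trans (hmono' j)
  have hpwo : (Set.univ : Set (Fin n → ℕ)).IsPWO := by
    have : IsWellOrder ℕ (· < ·) := inferInstance
    exact Set.isPWO_of_wellQuasiOrderedLE _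
  obtain ⟨i, j, hij, hle⟩ := Set.PartiallyWellOrderedOn.exists_lt hpwo (f := fun i => α i) (fun _ => Set.mem_univ _)
  have h1 : α i ∈ J (k j) := hsub (i + 1) j hij (hα1 i)
  exact hα2 j (mem_of_le (hmi _) h1 hle)

lemma quot_isMonomialIdeal {n : ℕ} {I : Set (Fin (n + 1) → ℕ)}
    (hI : IsMonomialIdeal I) (e : ℕ) : IsMonomialIdeal (quotIdeal I e) := by
  rw [isMonomialIdeal_iff]
  intro α hα δ
  have := isMonomialIdeal_iff.mp hI _ hα (Fin.cons 0 δ)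
  rw [cons_add_cons] at this
  simpa [quotIdeal] using this

lemma quot_mono {n : ℕ} {I : Set (Fin (n + 1) → ℕ)} (hI : IsMonomialIdeal I) :
    Monotone (quotIdeal I) := by
  intro e f hef α hα
  refine mem_of_le hI hα ?_
  intro i
  refine Fin.cases ?_ ?_ i <;> simp [hef]

end AuxLemmas
open NTree in
theorem statement6 (n : ℕ) :
    (∀ t : NTree n, IsIdealTree t →
      IsMonomialIdeal (idealSet t) ∧ (idealSet t).Nonempty) ∧
    (∀ I : Set (Fin n → ℕ), IsMonomialIdeal I → I.Nonempty →
      ∃! t : NTree n, IsIdealTree t ∧ idealSet t = I) := by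
  induction n with
  | zero =>
    constructor
    · intro t _
      cases t
      constructor
      · apply Set.Subset.antisymm (Set.subset_univ _)
        intro x _
        exact ⟨x, Set.mem_univ _, 0, Set.mem_univ _, add_zero x⟩
      · exact ⟨0, Set.mem_univ _⟩
    · intro I hI hne
      obtain ⟨x, hx⟩ := hne
      refine ⟨NTree.leaf, ⟨trivial, ?_⟩, ?_⟩
      · exact (Set.eq_univ_of_forall fun y => (Subsingleton.elim x y) ▸ hx).symm
      · intro t' _
        cases t'
        rfl
  | succ n ih =>
    obtain ⟨ih1, ih2⟩ := ih
    constructor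
    · -- forward direction
      intro t ht
      cases t with
      | node d hd c =>
        obtain ⟨h1, h2⟩ := ht
        constructor
        · rw [isMonomialIdeal_iff]
          rintro γ ⟨e, he, f, β, hef, hβ, rfl⟩ δ
          refine ⟨e, he, f + δ 0, β + Fin.tail δ,
            le_trans hef (Nat.le_add_right _ _),
            isMonomialIdeal_iff.mp (ih1 (c e he) (h1 e he)).1 β hβ (Fin.tail δ), ?_⟩
          funext i
          refine Fin.cases ?_ ?_ i <;> simp [Fin.tail]
        · obtain ⟨e, he⟩ := hd
          obtain ⟨β, hβ⟩ := (ih1 (c e he) (h1 e he)).2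
          exact ⟨Fin.cons e β, e, he, e, β, le_refl e, hβ, rfl⟩
    · -- backward direction
      intro I hI hne
      classical
      set J : ℕ → Set (Fin n → ℕ) := quotIdeal I with hJdef
      have hJm : Monotone J := quot_mono hI
      have hJmi : ∀ e, IsMonomialIdeal (J e) := quot_isMonomialIdeal hI
      obtain ⟨N, hN⟩ := chain_stab J hJm hJmi
      set Jump : ℕ → Prop := fun e => (J e).Nonempty ∧ ∀ f, f < e → J f ≠ J e
        with hJumpdef
      have hfind : ∀ m, (J m).Nonempty → ∃ e, e ≤ m ∧ Jump e ∧ J e = J m := by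
        intro m
        induction m using Nat.strong_induction_on with
        | _ m ihm =>
          intro hm
          by_cases hc : ∀ f, f < m → J f ≠ J m
          · exact ⟨m, le_refl m, ⟨hm, hc⟩, rfl⟩
          · push_neg at hc
            obtain ⟨f, hf, hfe⟩ := hc
            obtain ⟨e, he1, he2, he3⟩ := ihm f hf (hfe ▸ hm)
            exact ⟨e, he1.trans hf.le, he2, he3.trans hfe⟩
      have hJumpN : ∀ e, Jump e → e ≤ N := by
        rintro e ⟨-, h2⟩
        by_contra hc
        push_neg at hc
        exact h2 N hc (hN e hc.le).symm
      set d : Finset ℕ := (Finset.range (N + 1)).filter Jump with hddef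
      have hmemd : ∀ e, e ∈ d ↔ Jump e := by
        intro e
        constructor
        · intro h
          exact (Finset.mem_filter.mp h).2
        · intro h
          exact Finset.mem_filter.mpr
            ⟨Finset.mem_range.mpr (Nat.lt_succ_of_le (hJumpN e h)), h⟩
      obtain ⟨γ0, hγ0⟩ := hne
      have htail0 : Fin.tail γ0 ∈ J (γ0 0) := by
        show Fin.cons (γ0 0) (Fin.tail γ0) ∈ I
        rw [Fin.cons_self_tail]
        exact hγ0
      obtain ⟨e0, -, he02, -⟩ := hfind (γ0 0) ⟨_, htail0⟩
      have hdne : d.Nonempty := ⟨e0, (hmemd e0).mpr he02⟩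
      have hEU : ∀ e, e ∈ d → ∃ t : NTree n,
          (IsIdealTree t ∧ idealSet t = J e) ∧
          ∀ y, (IsIdealTree y ∧ idealSet y = J e) → y = t := by
        intro e he
        obtain ⟨t, ht, hu⟩ := ih2 (J e) (hJmi e) ((hmemd e).mp he).1
        exact ⟨t, ht, hu⟩
      choose T hT hU using hEU
      refine ⟨NTree.node d hdne T, ⟨?_, ?_⟩, ?_⟩
      · -- ideal tree
        refine ⟨fun e he => (hT e he).1, ?_⟩
        intro e f he hf hlt
        rw [(hT e he).2, (hT f hf).2]
        exact lt_of_le_of_ne (hJm hlt.le) (((hmemd f).mp hf).2 e hlt)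
      · -- idealSet = I
        apply Set.Subset.antisymm
        · rintro γ ⟨e, he, f, β, hef, hβ, rfl⟩
          rw [(hT e he).2] at hβ
          exact hJm hef hβ
        · intro γ hγ
          have htail : Fin.tail γ ∈ J (γ 0) := by
            show Fin.cons (γ 0) (Fin.tail γ) ∈ I
            rw [Fin.cons_self_tail]
            exact hγ
          obtain ⟨e, he1, he2, he3⟩ := hfind (γ 0) ⟨_, htail⟩
          refine ⟨e, (hmemd e).mpr he2, γ 0, Fin.tail γ, he1, ?_,
            (Fin.cons_self_tail γ).symm⟩
          rw [(hT e ((hmemd e).mpr he2)).2, he3]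
          exact htail
      · -- uniqueness
        rintro t' ⟨ht'i, ht'I⟩
        cases t' with
        | node d' hd' c' =>
          obtain ⟨hc'i, hstrict⟩ := ht'i
          have f1 : ∀ e (he : e ∈ d'), idealSet (c' e he) ⊆ J e := by
            intro e he β hβ
            show Fin.cons e β ∈ I
            rw [← ht'I]
            exact ⟨e, he, e, β, le_refl e, hβ, rfl⟩
          have chainc' : ∀ e f (he : e ∈ d') (hf : f ∈ d'), e ≤ f →
              idealSet (c' e he) ⊆ idealSet (c' f hf) := by
            intro e f he hf hef
            rcases hef.lt_or_eq with h | h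
            · exact (hstrict e f he hf h).subset
            · subst h
              exact subset_rfl
          have hcover : ∀ m β, β ∈ J m →
              ∃ e, ∃ he : e ∈ d', e ≤ m ∧ β ∈ idealSet (c' e he) := by
            intro m β hβ
            have hm : Fin.cons m β ∈ idealSet (NTree.node d' hd' c') := by
              rw [ht'I]; exact hβ
            obtain ⟨e, he, f, β', hef, hβ', heq⟩ := hm
            have hm0 : m = f := by
              have := congrFun heq 0
              simpa using this
            have hβb : β = β' := by
              have := congrArg Fin.tail heq
              simpa [Fin.tail_cons] using this
            exact ⟨e, he, hm0 ▸ hef, hβb ▸ hβ'⟩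
          have hJeq : ∀ m, (J m).Nonempty →
              ∃ E, ∃ hE : E ∈ d', E ≤ m ∧ J m = J E ∧
                J m = idealSet (c' E hE) := by
            intro m hm
            obtain ⟨β, hβ⟩ := hm
            obtain ⟨e1, he1, he1m, -⟩ := hcover m β hβ
            set D : Finset ℕ := d'.filter (· ≤ m) with hDdef
            have hDne : D.Nonempty := ⟨e1, Finset.mem_filter.mpr ⟨he1, he1m⟩⟩
            set E : ℕ := D.max' hDne with hEdef
            have hED : E ∈ D := D.max'_mem hDne
            have hE : E ∈ d' := (Finset.mem_filter.mp hED).1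
            have hEm : E ≤ m := by
              have := (Finset.mem_filter.mp hED).2
              simpa using this
            have hsub1 : J m ⊆ idealSet (c' E hE) := by
              intro β' hβ'
              obtain ⟨e, he, hem, hβ''⟩ := hcover m β' hβ'
              have heE : e ≤ E := D.le_max' e (Finset.mem_filter.mpr ⟨he, hem⟩)
              exact chainc' e E he hE heE hβ''
            have hsub2 : idealSet (c' E hE) ⊆ J E := f1 E hE
            have hsub3 : J E ⊆ J m := hJm hEm
            refine ⟨E, hE, hEm, ?_, ?_⟩
            · exact Set.Subset.antisymm (hsub1.trans hsub2) hsub3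
            · exact Set.Subset.antisymm hsub1 (hsub2.trans hsub3)
          have hc'J : ∀ e (he : e ∈ d'), idealSet (c' e he) = J e := by
            intro e he
            have hne' : (J e).Nonempty :=
              Set.Nonempty.mono (f1 e he) (ih1 (c' e he) (hc'i e he)).2
            obtain ⟨E, hE, hEm, -, hJc⟩ := hJeq e hne'
            rcases hEm.lt_or_eq with hlt | heq
            · exfalso
              have h1 : idealSet (c' E hE) ⊂ idealSet (c' e he) :=
                hstrict E e hE he hlt
              have h2 : idealSet (c' e he) ⊆ idealSet (c' E hE) := by
                rw [← hJc]; exact f1 e he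
              exact h1.not_subset h2
            · subst heq
              exact hJc.symm
          have hd'eq : ∀ e, e ∈ d' ↔ Jump e := by
            intro e
            constructor
            · intro he
              have hne' : (J e).Nonempty := by
                rw [← hc'J e he]
                exact (ih1 (c' e he) (hc'i e he)).2
              refine ⟨hne', ?_⟩
              intro f hf hfe
              have hnef : (J f).Nonempty := by rw [hfe]; exact hne'
              obtain ⟨F, hF, hFm, -, hJcF⟩ := hJeq f hnef
              have hstr : idealSet (c' F hF) ⊂ idealSet (c' e he) :=
                hstrict F e hF he (lt_of_le_of_lt hFm hf)
              rw [hc'J e he, ← hfe, hJcF] at hstr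
              exact (ssubset_irrefl _) hstr
            · intro hJe
              obtain ⟨E, hE, hEm, hJE, -⟩ := hJeq e hJe.1
              rcases hEm.lt_or_eq with hlt | heq
              · exact absurd hJE.symm (hJe.2 E hlt)
              · subst heq
                exact hE
          have hdd : d' = d := by
            ext e
            rw [hmemd e, hd'eq e]
          subst hdd
          have hchild : c' = T := by
            funext e he
            exact hU e he (c' e he) ⟨hc'i e he, hc'J e he⟩
          subst hchild
          rfl
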